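/- Let V be an n-dimensional left vector space over a division ring R and let 1 < k ≤ n−k. Consider the graph A_k whose vertices are the apartments of G_k(V), two apartments being adjacent if and only if their intersection is a maximal inexact subset. Then the graph A_k is connected. -/

import Mathlib

open Submodule Set Function Module

/-!
If `b'` arises from the basis `b` by the transvection `b i ↦ b i + β • b j` (`β ≠ 0`), then
`J_k(b) ∩ J_k(b')` is the special subset `J(+i,+j) ∪ J(-i)` of `J_k(b)`, and it is a maximal
inexact subset. Indeed, let `y` be `2k`-independent with `J_k(y)` containing the special subset
and one more member `⟨b S₀⟩` (`i ∈ S₀`, `j ∉ S₀`) of `J_k(b)`. Every line `⟨b m⟩` is an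
intersection of at most three such members, and intersections of members of `J_k(y)` are spanned
by vectors of `y`; so the lines of `b` are lines of `y`, and `J_k(y) = J_k(b)`.

Hence transvections are edges of the graph, while rescaling a basis vector does not change the
apartment. Replacing a single basis vector is a rescaling followed by transvections, and any basis
is reached from any other by such replacements (Steinitz exchange).
-/

/-- A family of vectors is `m`-independent if every `m`-element subfamily is
linearly independent. -/
def MIndep (R : Type*) {W : Type*} [DivisionRing R] [AddCommGroup W] [Module R W]
    {n : ℕ} (m : ℕ) (x : Fin n → W) : Prop :=
  ∀ A : Finset (Fin n), A.card = m → LinearIndependent R (fun i : A => x (i : Fin n))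

/-- `J_k(X)`: the set of all `k`-dimensional subspaces spanned by `k`-element subsets of
the family `x`. -/
def JkSet (R : Type*) {W : Type*} [DivisionRing R] [AddCommGroup W] [Module R W]
    {n : ℕ} (k : ℕ) (x : Fin n → W) : Set (Submodule R W) :=
  {P | ∃ A : Finset (Fin n), A.card = k ∧ P = Submodule.span R (x '' ↑A)}

/-- The special subset `J(+i,+j) ∪ J(-i)` of `J = J_k(X)`: all members of `J` which either
contain both `x i` and `x j`, or do not contain `x i`. -/
def SpecialSubset (R : Type*) {W : Type*} [DivisionRing R] [AddCommGroup W] [Module R W]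
    {n : ℕ} (k : ℕ) (x : Fin n → W) (i j : Fin n) : Set (Submodule R W) :=
  {P | P ∈ JkSet R k x ∧ ((x i ∈ P ∧ x j ∈ P) ∨ x i ∉ P)}

/-- A subset `Z` of `J = J_k(X)` is inexact if there is a `(2k)`-independent `n`-element
family `y` with `J_k(Y) ≠ J` and `Z ⊆ J_k(Y)`. -/
def InexactIn (R : Type*) {W : Type*} [DivisionRing R] [AddCommGroup W] [Module R W]
    (n k : ℕ) (J : Set (Submodule R W)) (Z : Set (Submodule R W)) : Prop :=
  ∃ y : Fin n → W, Function.Injective y ∧ MIndep R (2 * k) y ∧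
    JkSet R k y ≠ J ∧ Z ⊆ JkSet R k y

/-- Apartments of `G_k(V)` for an `n`-dimensional space `V`: the sets of `k`-dimensional
subspaces spanned by subsets of a base of `V`. -/
def IsApartmentSet (R V : Type*) [DivisionRing R] [AddCommGroup V] [Module R V]
    (n k : ℕ) (𝒜 : Set (Submodule R V)) : Prop :=
  ∃ b : Basis (Fin n) R V, 𝒜 = JkSet R k ⇑b

/-- A maximal inexact subset of `J`: an inexact subset maximal with respect to inclusion
among the inexact subsets of `J`. -/
def MaxInexactIn (R : Type*) {W : Type*} [DivisionRing R] [AddCommGroup W] [Module R W]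
    (n k : ℕ) (J Z : Set (Submodule R W)) : Prop :=
  Z ⊆ J ∧ InexactIn R n k J Z ∧
    ∀ Z' ⊆ J, InexactIn R n k J Z' → Z ⊆ Z' → Z' = Z

/-- The graph `A_k` whose vertices are the apartments of `G_k(V)`, two apartments being
adjacent iff their intersection is a maximal inexact subset (of each of them). -/
def apartmentGraph (R V : Type*) [DivisionRing R] [AddCommGroup V] [Module R V]
    (n k : ℕ) : SimpleGraph {𝒜 : Set (Submodule R V) // IsApartmentSet R V n k 𝒜} where
  Adj A A' := A ≠ A' ∧ MaxInexactIn R n k A.1 (A.1 ∩ A'.1) ∧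
    MaxInexactIn R n k A'.1 (A.1 ∩ A'.1)
  symm := by
    constructor
    intro A A' h
    exact ⟨h.1.symm, by rw [Set.inter_comm]; exact h.2.2, by rw [Set.inter_comm]; exact h.2.1⟩
  loopless := by
    constructor
    intro A h
    exact h.1 rfl

theorem Set.image_update_of_notMem {α β : Type*} [DecidableEq α] (f : α → β) (l : α) (c : β)
    {s : Set α} (hl : l ∉ s) : update f l c '' s = f '' s :=
  image_congr fun _ hm => update_of_ne (ne_of_mem_of_not_mem hm hl) c f

section LinearIndependent

variable {R W ι : Type*} [DivisionRing R] [AddCommGroup W] [Module R W] {v : ι → W}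

theorem LinearIndependent.inf_span_image (hv : LinearIndependent R v) (s t : Set ι) :
    span R (v '' s) ⊓ span R (v '' t) = span R (v '' (s ∩ t)) := by
  simp only [Finsupp.span_image_eq_map_linearCombination, Finsupp.supported_inter,
    Submodule.map_inf _ hv.finsuppLinearCombination_injective]

theorem LinearIndepOn.inf_span_image {u s t : Set ι} (hv : LinearIndepOn R v u) (hs : s ⊆ u)
    (ht : t ⊆ u) : span R (v '' s) ⊓ span R (v '' t) = span R (v '' (s ∩ t)) := by
  have himg : ∀ r ⊆ u, (fun x : u => v x) '' ((↑) ⁻¹' r) = v '' r := fun r hr => by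
    rw [← Set.image_image, Subtype.image_preimage_coe, inter_eq_right.2 hr]
  rw [← himg s hs, ← himg t ht, ← himg _ (inter_subset_left.trans hs), Set.preimage_inter]
  exact hv.linearIndependent.inf_span_image _ _

theorem exists_span_singleton_eq_of_span_singleton_eq_span_image (hv0 : ∀ i, v i ≠ 0)
    {x : W} (hx : x ≠ 0) {s : Set ι} (h : span R {x} = span R (v '' s)) :
    ∃ i, span R {v i} = span R {x} := by
  obtain ⟨i, hi⟩ : s.Nonempty := by
    by_contra hs
    rw [not_nonempty_iff_eq_empty.1 hs, image_empty, span_empty, span_singleton_eq_bot] at h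
    exact hx h
  obtain ⟨a, ha⟩ := mem_span_singleton.1 (h ▸ subset_span (mem_image_of_mem v hi))
  have ha0 : a ≠ 0 := by rintro rfl; exact hv0 i (by rw [← ha, zero_smul])
  exact ⟨i, ha ▸ span_singleton_smul_eq (isUnit_iff_ne_zero.2 ha0) x⟩

theorem span_image_congr_span_singleton {v' : ι → W} {s : Set ι}
    (h : ∀ i ∈ s, span R {v i} = span R {v' i}) : span R (v '' s) = span R (v' '' s) := by
  simp_rw [image_eq_iUnion, span_iUnion₂]
  exact iSup_congr fun i => iSup_congr (h i)

theorem span_image_update_add_smul_le [DecidableEq ι] {i j : ι} (β : R) {s : Set ι}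
    (hj : j ∈ s) : span R (update v i (v i + β • v j) '' s) ≤ span R (v '' s) := by
  refine span_le.2 ?_
  rintro _ ⟨m, hm, rfl⟩
  rcases eq_or_ne m i with rfl | hmi
  · rw [update_self]
    exact add_mem (subset_span (mem_image_of_mem v hm))
      (smul_mem _ β (subset_span (mem_image_of_mem v hj)))
  · rw [update_of_ne hmi]
    exact subset_span (mem_image_of_mem v hm)

theorem span_image_update_add_smul [DecidableEq ι] {i j : ι} (hij : i ≠ j) (β : R)
    {s : Set ι} (h : j ∈ s ∨ i ∉ s) :
    span R (update v i (v i + β • v j) '' s) = span R (v '' s) := by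
  rcases h with hj | hi
  · refine le_antisymm (span_image_update_add_smul_le β hj) ?_
    have hinv : update (update v i (v i + β • v j)) i
        (update v i (v i + β • v j) i + (-β) • update v i (v i + β • v j) j) = v := by
      simp [update_of_ne hij.symm, neg_smul]
    conv_lhs => rw [← hinv]
    exact span_image_update_add_smul_le (-β) hj
  · rw [image_update_of_notMem v i _ hi]

end LinearIndependent

theorem Finset.exists_card_eq_card_eq_inter_eq {α : Type*} [Fintype α] [DecidableEq α]
    {k : ℕ} {C F : Finset α} (hCF : Disjoint C F) (hCk : C.card ≤ k)
    (hcard : F.card + 2 * k ≤ Fintype.card α + C.card) :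
    ∃ S T : Finset α, S.card = k ∧ T.card = k ∧ S ∩ T = C ∧ Disjoint S F ∧ Disjoint T F := by
  set D := (C ∪ F)ᶜ
  have hD : D.card = Fintype.card α - C.card - F.card := by
    rw [card_compl, card_union_of_disjoint hCF]; omega
  obtain ⟨S₁, hS₁D, hS₁⟩ := exists_subset_card_eq (s := D) (n := k - C.card) (by omega)
  obtain ⟨T₁, hT₁D, hT₁⟩ := exists_subset_card_eq (s := D \ S₁) (n := k - C.card)
    (by rw [card_sdiff_of_subset hS₁D]; omega)
  have hCS₁ : Disjoint C S₁ := disjoint_of_subset_right hS₁D (disjoint_compl_right.mono_left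
    subset_union_left)
  have hCT₁ : Disjoint C T₁ := disjoint_of_subset_right (hT₁D.trans sdiff_subset)
    (disjoint_compl_right.mono_left subset_union_left)
  have hFD : Disjoint D F := disjoint_compl_left.mono_right subset_union_right
  refine ⟨C ∪ S₁, C ∪ T₁, by rw [card_union_of_disjoint hCS₁]; omega,
    by rw [card_union_of_disjoint hCT₁]; omega, ?_,
    disjoint_union_left.2 ⟨hCF, hFD.mono_left hS₁D⟩,
    disjoint_union_left.2 ⟨hCF, hFD.mono_left (hT₁D.trans sdiff_subset)⟩⟩
  rw [← union_inter_distrib_left,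
    disjoint_iff_inter_eq_empty.1 (disjoint_of_subset_right hT₁D disjoint_sdiff), union_empty]

section MIndep

variable {R W : Type*} [DivisionRing R] [AddCommGroup W] [Module R W] {n m : ℕ}
  {y : Fin n → W}

theorem LinearIndependent.mIndep (hy : LinearIndependent R y) (m : ℕ) : MIndep R m y :=
  fun _ _ => hy.comp _ Subtype.val_injective

theorem MIndep.linearIndepOn (hy : MIndep R m y) (hmn : m ≤ n) {U : Finset (Fin n)}
    (hU : U.card ≤ m) : LinearIndepOn R y ↑U := by
  obtain ⟨A, hUA, hA⟩ := Finset.exists_superset_card_eq hU (by simpa using hmn)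
  exact LinearIndepOn.mono (hy A hA) hUA

theorem MIndep.ne_zero (hy : MIndep R m y) (hm : 0 < m) (hmn : m ≤ n) (i : Fin n) :
    y i ≠ 0 :=
  (hy.linearIndepOn hmn (U := {i}) (by rw [Finset.card_singleton]; exact hm)).ne_zero (by simp)

theorem MIndep.inf_span_image {k : ℕ} (hy : MIndep R (2 * k) y) (h2k : 2 * k ≤ n)
    {A B : Finset (Fin n)} (hA : A.card ≤ k) (hB : B.card ≤ k) :
    span R (y '' A) ⊓ span R (y '' B) = span R (y '' ↑(A ∩ B)) := by
  rw [Finset.coe_inter]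
  exact (hy.linearIndepOn h2k ((Finset.card_union_le A B).trans (by omega))).inf_span_image
    (by simp) (by simp)

end MIndep

section JkSet

variable {R W : Type*} [DivisionRing R] [AddCommGroup W] [Module R W] {n k : ℕ}

theorem span_image_mem_jkSet (x : Fin n → W) {S : Finset (Fin n)} (hS : S.card = k) :
    span R (x '' S) ∈ JkSet R k x :=
  ⟨S, hS, rfl⟩

theorem jkSet_comp_perm (x : Fin n → W) (e : Equiv.Perm (Fin n)) :
    JkSet R k (x ∘ e) = JkSet R k x := by
  ext P
  constructor
  · rintro ⟨A, hA, rfl⟩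
    exact ⟨A.map e.toEmbedding, by simpa using hA, by simp [Set.image_image]⟩
  · rintro ⟨A, hA, rfl⟩
    refine ⟨A.map e.symm.toEmbedding, by simpa using hA, ?_⟩
    simp [Set.image_image]

theorem jkSet_eq_of_span_singleton_eq {x x' : Fin n → W}
    (h : ∀ i, span R {x i} = span R {x' i}) : JkSet R k x = JkSet R k x' := by
  ext P
  simp only [JkSet, mem_ofPred_eq, span_image_congr_span_singleton fun i _ => h i]

theorem jkSet_eq_of_forall_exists_span_singleton_eq {x y : Fin n → W}
    (hx : LinearIndependent R x) (h : ∀ i, ∃ j, span R {y j} = span R {x i}) :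
    JkSet R k y = JkSet R k x := by
  choose π hπ using h
  have hπinj : Injective π := fun i i' hii' => by
    by_contra hne
    refine hx.notMem_span_image (s := {i'}) hne ?_
    rw [image_singleton, ← hπ i', ← hii', hπ i]
    exact mem_span_singleton_self _
  rw [← jkSet_comp_perm y (Equiv.ofBijective π (Finite.injective_iff_bijective.1 hπinj))]
  exact jkSet_eq_of_span_singleton_eq hπ

end JkSet

section Apartment

variable {R V : Type*} [DivisionRing R] [AddCommGroup V] [Module R V] {n k : ℕ} {i j : Fin n}

theorem span_image_mem_specialSubset_iff (b : Basis (Fin n) R V) {S : Finset (Fin n)}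
    (hS : S.card = k) :
    span R (b '' S) ∈ SpecialSubset R k b i j ↔ (i ∈ S ∧ j ∈ S) ∨ i ∉ S := by
  simp [SpecialSubset, span_image_mem_jkSet _ hS]

theorem jkSet_inter_jkSet_eq_specialSubset (b b' : Basis (Fin n) R V) (hij : i ≠ j) {β : R}
    (hβ : β ≠ 0) (hb' : ⇑b' = update ⇑b i (b i + β • b j)) :
    JkSet R k b ∩ JkSet R k b' = SpecialSubset R k b i j := by
  have hspan : ∀ S : Finset (Fin n), j ∈ S ∨ i ∉ S → span R (b' '' S) = span R (b '' S) :=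
    fun S hS => hb' ▸ span_image_update_add_smul hij β (by simpa using hS)
  ext P
  constructor
  · rintro ⟨⟨S, hS, rfl⟩, T, -, hST⟩
    rw [span_image_mem_specialSubset_iff b hS]
    by_contra! hc
    obtain ⟨hjS, hiS⟩ : j ∉ S ∧ i ∈ S := ⟨hc.1 hc.2, hc.2⟩
    by_cases hT : j ∈ T ∨ i ∉ T
    · rw [hspan T hT] at hST
      obtain rfl : S = T := by
        ext m
        simpa using congrArg (b m ∈ ·) hST
      tauto
    · push Not at hT
      have hb'i : b' i ∈ span R (b '' S) := hST ▸ subset_span (mem_image_of_mem b' hT.2)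
      have hbj : β • b j ∈ span R (b '' S) := by
        rw [hb', update_self] at hb'i
        simpa using sub_mem hb'i (subset_span (mem_image_of_mem b hiS))
      exact hjS (by simpa using (smul_mem_iff _ hβ).1 hbj)
  · rintro ⟨⟨S, hS, rfl⟩, hP⟩
    refine ⟨⟨S, hS, rfl⟩, S, hS, (hspan S ?_).symm⟩
    simp only [b.self_mem_span_image, Finset.mem_coe] at hP
    tauto

theorem jkSet_ne_of_transvection (hk : 0 < k) (h2k : 2 * k ≤ n) (b b' : Basis (Fin n) R V)
    (hij : i ≠ j) {β : R} (hβ : β ≠ 0) (hb' : ⇑b' = update ⇑b i (b i + β • b j)) :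
    JkSet R k b' ≠ JkSet R k b := by
  obtain ⟨S, _, hS, _, hST, hSj, -⟩ := Finset.exists_card_eq_card_eq_inter_eq (k := k)
    (Finset.disjoint_singleton.2 hij) (by rw [Finset.card_singleton]; exact hk) (by simp; omega)
  have hiS : i ∈ S := Finset.mem_of_mem_inter_left (hST ▸ Finset.mem_singleton_self i)
  intro h
  have hP := span_image_mem_jkSet (R := R) b hS
  have hPspecial : span R (b '' S) ∈ SpecialSubset R k b i j :=
    jkSet_inter_jkSet_eq_specialSubset b b' hij hβ hb' ▸ ⟨hP, h ▸ hP⟩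
  rw [span_image_mem_specialSubset_iff b hS] at hPspecial
  exact hPspecial.elim (fun hij => Finset.disjoint_singleton_right.1 hSj hij.2) (· hiS)

theorem exists_span_singleton_eq_of_specialSubset_subset (b : Basis (Fin n) R V) (hk : 0 < k)
    (h2k : 2 * k ≤ n) {y : Fin n → V} (hy : MIndep R (2 * k) y)
    (hZ : SpecialSubset R k b i j ⊆ JkSet R k y) {m : Fin n} (hmi : m ≠ i) :
    ∃ m', span R {y m'} = span R {b m} := by
  obtain ⟨S, T, hS, hT, hST, hSi, hTi⟩ := Finset.exists_card_eq_card_eq_inter_eq (k := k)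
    (Finset.disjoint_singleton.2 hmi) (by simp; omega) (by simp; omega)
  have hmem : ∀ {S : Finset (Fin n)}, Disjoint S {i} → S.card = k →
      span R (b '' S) ∈ JkSet R k y := fun hSi hS =>
    hZ ((span_image_mem_specialSubset_iff b hS).2 (Or.inr (Finset.disjoint_singleton_right.1 hSi)))
  obtain ⟨U, hU, hUeq⟩ := hmem hSi hS
  obtain ⟨U', hU', hU'eq⟩ := hmem hTi hT
  refine exists_span_singleton_eq_of_span_singleton_eq_span_image (hy.ne_zero (by omega) h2k)
    (b.ne_zero m) (s := ↑(U ∩ U')) ?_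
  rw [← hy.inf_span_image h2k hU.le hU'.le, ← hUeq, ← hU'eq, b.linearIndependent.inf_span_image,
    ← Finset.coe_inter, hST, Finset.coe_singleton, image_singleton]

theorem exists_span_singleton_eq_self_of_specialSubset_subset (b : Basis (Fin n) R V)
    (hk : 1 < k) (h2k : 2 * k ≤ n) {y : Fin n → V} (hy : MIndep R (2 * k) y)
    (hZ : SpecialSubset R k b i j ⊆ JkSet R k y) {S₀ : Finset (Fin n)} (hiS₀ : i ∈ S₀)
    (hjS₀ : j ∉ S₀) (hS₀y : span R (b '' S₀) ∈ JkSet R k y) :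
    ∃ m', span R {y m'} = span R {b i} := by
  obtain ⟨S, T, hS, hT, hST, -, -⟩ := Finset.exists_card_eq_card_eq_inter_eq (k := k)
    (Finset.disjoint_empty_right {i, j}) (Finset.card_le_two.trans hk) (by simp; omega)
  have hmem : ∀ {S : Finset (Fin n)}, i ∈ S → j ∈ S → S.card = k →
      span R (b '' S) ∈ JkSet R k y := fun hi hj hS =>
    hZ ((span_image_mem_specialSubset_iff b hS).2 (Or.inl ⟨hi, hj⟩))
  have hiST : i ∈ S ∩ T := by simp [hST]
  have hjST : j ∈ S ∩ T := by simp [hST]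
  rw [Finset.mem_inter] at hiST hjST
  obtain ⟨U₀, hU₀, hU₀eq⟩ := hS₀y
  obtain ⟨U, hU, hUeq⟩ := hmem hiST.1 hjST.1 hS
  obtain ⟨U', hU', hU'eq⟩ := hmem hiST.2 hjST.2 hT
  refine exists_span_singleton_eq_of_span_singleton_eq_span_image (hy.ne_zero (by omega) h2k)
    (b.ne_zero i) (s := ↑(U₀ ∩ (U ∩ U'))) ?_
  rw [← hy.inf_span_image h2k hU₀.le ((Finset.card_le_card Finset.inter_subset_left).trans hU.le),
    ← hy.inf_span_image h2k hU.le hU'.le, ← hU₀eq, ← hUeq, ← hU'eq,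
    b.linearIndependent.inf_span_image, b.linearIndependent.inf_span_image, ← Finset.coe_inter,
    ← Finset.coe_inter, hST, Finset.inter_insert_of_mem hiS₀, Finset.inter_singleton_of_notMem hjS₀]
  simp

theorem jkSet_eq_of_specialSubset_subset (b : Basis (Fin n) R V) (hk : 1 < k)
    (h2k : 2 * k ≤ n) {y : Fin n → V} (hy : MIndep R (2 * k) y)
    (hZ : SpecialSubset R k b i j ⊆ JkSet R k y) {S₀ : Finset (Fin n)} (hiS₀ : i ∈ S₀)
    (hjS₀ : j ∉ S₀) (hS₀y : span R (b '' S₀) ∈ JkSet R k y) :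
    JkSet R k y = JkSet R k b := by
  refine jkSet_eq_of_forall_exists_span_singleton_eq b.linearIndependent fun m => ?_
  rcases eq_or_ne m i with rfl | hmi
  · exact exists_span_singleton_eq_self_of_specialSubset_subset b hk h2k hy hZ hiS₀ hjS₀ hS₀y
  · exact exists_span_singleton_eq_of_specialSubset_subset b (by omega) h2k hy hZ hmi

theorem maxInexactIn_jkSet_inter_of_transvection (hk : 1 < k) (h2k : 2 * k ≤ n)
    (b b' : Basis (Fin n) R V) (hij : i ≠ j) {β : R} (hβ : β ≠ 0)
    (hb' : ⇑b' = update ⇑b i (b i + β • b j)) :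
    MaxInexactIn R n k (JkSet R k b) (JkSet R k b ∩ JkSet R k b') := by
  have hinter := jkSet_inter_jkSet_eq_specialSubset (k := k) b b' hij hβ hb'
  refine ⟨inter_subset_left, ⟨b', b'.injective, b'.linearIndependent.mIndep _,
    jkSet_ne_of_transvection (by omega) h2k b b' hij hβ hb', inter_subset_right⟩, ?_⟩
  rintro Z hZb ⟨y, -, hy, hyb, hZy⟩ hZ
  refine hZ.antisymm' fun P hP => ?_
  obtain ⟨S, hS, rfl⟩ := hZb hP
  rw [hinter, span_image_mem_specialSubset_iff b hS]
  by_contra! hPS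
  exact hyb (jkSet_eq_of_specialSubset_subset b hk h2k hy ((hinter ▸ hZ).trans hZy) hPS.2
    (hPS.1 hPS.2) (hZy hP))

end Apartment

theorem Module.Basis.exists_coe_eq_update {R V : Type*} [DivisionRing R] [AddCommGroup V]
    [Module R V] {n : ℕ} (b : Basis (Fin n) R V) {l : Fin n} {c : V} (hc : b.repr c l ≠ 0) :
    ∃ b' : Basis (Fin n) R V, ⇑b' = update ⇑b l c := by
  have hcl : c ∉ span R (b '' {l}ᶜ) := by simpa [b.mem_span_image] using hc
  have hli : LinearIndepOn R (update ⇑b l c) (insert l {l}ᶜ) := by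
    refine LinearIndepOn.insert ?_ ?_
    · exact (b.linearIndependent.linearIndepOn _).congr fun m hm => (update_of_ne hm _ _).symm
    · rwa [update_self, image_update_of_notMem _ l _ (s := {l}ᶜ) (by simp)]
  rw [insert_eq, union_compl_self, linearIndepOn_univ_iff] at hli
  have : Nonempty (Fin n) := ⟨l⟩
  exact ⟨basisOfLinearIndependentOfCardEqFinrank hli (by simp [finrank_eq_card_basis b]),
    coe_basisOfLinearIndependentOfCardEqFinrank _ _⟩

theorem Module.Basis.exists_repr_ne_zero_notMem_range {R V : Type*} [DivisionRing R]
    [AddCommGroup V] [Module R V] {n : ℕ} (b b' : Basis (Fin n) R V) {m₀ : Fin n}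
    (hm₀ : b' m₀ ∉ Set.range b) : ∃ l, b.repr (b' m₀) l ≠ 0 ∧ b l ∉ Set.range b' := by
  by_contra! h
  refine b'.linearIndependent.notMem_span_image (s := {m₀}ᶜ) (notMem_compl_iff.2 rfl) ?_
  refine span_mono ?_ (b.mem_span_repr_support (b' m₀))
  rintro _ ⟨l, hl, rfl⟩
  obtain ⟨m, hm⟩ := h l (Finsupp.mem_support_iff.1 hl)
  exact ⟨m, fun hmm₀ => hm₀ ⟨l, hm ▸ hmm₀ ▸ rfl⟩, hm⟩

theorem Set.setOf_notMem_range_update_ssubset {α β : Type*} [DecidableEq α] {f g : α → β}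
    {l m₀ : α} (hl : f l ∉ range g) (hm₀ : g m₀ ∉ range f) :
    {m | g m ∉ range (update f l (g m₀))} ⊂ {m | g m ∉ range f} := by
  refine (ssubset_iff_of_subset fun m hm => ?_).2 ⟨m₀, hm₀, fun h => h ⟨l, update_self _ _ _⟩⟩
  rintro ⟨l', hl'⟩
  rcases eq_or_ne l' l with rfl | hl'l
  · exact hl ⟨m, hl'.symm⟩
  · exact hm ⟨l', by rw [update_of_ne hl'l, hl']⟩

section Graph

variable {R V : Type*} [DivisionRing R] [AddCommGroup V] [Module R V] {n k : ℕ}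

def apartmentVertex (k : ℕ) (b : Basis (Fin n) R V) :
    {𝒜 : Set (Submodule R V) // IsApartmentSet R V n k 𝒜} :=
  ⟨JkSet R k b, b, rfl⟩

theorem reachable_apartmentVertex_of_jkSet_eq {b b' : Basis (Fin n) R V}
    (h : JkSet R k b = JkSet R k b') :
    (apartmentGraph R V n k).Reachable (apartmentVertex k b) (apartmentVertex k b') :=
  (show apartmentVertex k b = apartmentVertex k b' from Subtype.ext h) ▸ .rfl

theorem apartmentGraph_adj_of_transvection (hk : 1 < k) (h2k : 2 * k ≤ n)
    (b b' : Basis (Fin n) R V) {i j : Fin n} (hij : i ≠ j) {β : R} (hβ : β ≠ 0)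
    (hb' : ⇑b' = update ⇑b i (b i + β • b j)) :
    (apartmentGraph R V n k).Adj (apartmentVertex k b) (apartmentVertex k b') := by
  have hb : ⇑b = update ⇑b' i (b' i + (-β) • b' j) := by
    simp [hb', update_of_ne hij.symm, neg_smul]
  refine ⟨fun h => jkSet_ne_of_transvection (by omega) h2k b b' hij hβ hb'
      (congrArg Subtype.val h).symm,
    maxInexactIn_jkSet_inter_of_transvection hk h2k b b' hij hβ hb', ?_⟩
  rw [apartmentVertex, apartmentVertex, inter_comm]
  exact maxInexactIn_jkSet_inter_of_transvection hk h2k b' b hij (neg_ne_zero.2 hβ) hb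

theorem reachable_of_transvection (hk : 1 < k) (h2k : 2 * k ≤ n) (b b' : Basis (Fin n) R V)
    {i j : Fin n} (hij : i ≠ j) (β : R) (hb' : ⇑b' = update ⇑b i (b i + β • b j)) :
    (apartmentGraph R V n k).Reachable (apartmentVertex k b) (apartmentVertex k b') := by
  rcases eq_or_ne β 0 with rfl | hβ
  · exact reachable_apartmentVertex_of_jkSet_eq (by simp [hb'])
  · exact (apartmentGraph_adj_of_transvection hk h2k b b' hij hβ hb').reachable

theorem reachable_of_coe_eq_update (hk : 1 < k) (h2k : 2 * k ≤ n) (b b' : Basis (Fin n) R V)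
    {l : Fin n} {c : V} (hb' : ⇑b' = update ⇑b l c) :
    (apartmentGraph R V n k).Reachable (apartmentVertex k b) (apartmentVertex k b') := by
  classical
  set γ := b.repr c
  have hγl : γ l ≠ 0 := by
    intro h0
    have hc : c ∈ span R (b '' {l}ᶜ) := by simpa [b.mem_span_image] using h0
    rw [← image_update_of_notMem b l c (s := {l}ᶜ) (by simp), ← hb'] at hc
    refine b'.linearIndependent.notMem_span_image (s := {l}ᶜ) (x := l) (by simp) ?_
    rwa [hb', update_self, ← hb']
  have partial_sum : ∀ T : Finset (Fin n), l ∉ T → ∀ b₁ : Basis (Fin n) R V,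
      ⇑b₁ = update ⇑b l (∑ m ∈ insert l T, γ m • b m) →
      (apartmentGraph R V n k).Reachable (apartmentVertex k b) (apartmentVertex k b₁) := by
    intro T
    induction T using Finset.induction_on with
    | empty =>
      intro _ b₁ hb₁
      refine reachable_apartmentVertex_of_jkSet_eq (jkSet_eq_of_span_singleton_eq fun m => ?_)
      rcases eq_or_ne m l with rfl | hml
      · simp [hb₁, span_singleton_smul_eq (isUnit_iff_ne_zero.2 hγl)]
      · simp [hb₁, update_of_ne hml]
    | insert a T haT ih =>
      intro hlaT b₁ hb₁
      have hal : a ≠ l := fun h => hlaT (h ▸ Finset.mem_insert_self a T)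
      have hlT : l ∉ T := fun h => hlaT (Finset.mem_insert_of_mem h)
      obtain ⟨b₀, hb₀⟩ := b.exists_coe_eq_update (l := l)
        (c := ∑ m ∈ insert l T, γ m • b m) (by simpa [Finset.sum_insert hlT, γ,
          Finsupp.single_apply, hlT] using hγl)
      have hb₁' : ⇑b₁ = update ⇑b₀ l (b₀ l + γ a • b₀ a) := by
        rw [hb₁, hb₀, update_idem, update_self, update_of_ne hal, Finset.insert_comm,
          Finset.sum_insert (by simp [hal, haT]), add_comm]
      exact (ih hlT b₀ hb₀).trans (reachable_of_transvection hk h2k b₀ b₁ hal.symm (γ a) hb₁')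
  exact partial_sum (Finset.univ.erase l) (by simp) b'
    (by rw [Finset.insert_erase (Finset.mem_univ l), b.sum_repr, hb'])

theorem reachable_apartmentVertex (hk : 1 < k) (h2k : 2 * k ≤ n) (b b' : Basis (Fin n) R V) :
    (apartmentGraph R V n k).Reachable (apartmentVertex k b) (apartmentVertex k b') := by
  classical
  induction hN : {m | b' m ∉ range b}.ncard using Nat.strong_induction_on generalizing b with
  | _ N ih =>
  by_cases hrange : ∀ m, b' m ∈ range b
  · refine reachable_apartmentVertex_of_jkSet_eq
      (jkSet_eq_of_forall_exists_span_singleton_eq b'.linearIndependent fun m => ?_)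
    obtain ⟨l, hl⟩ := hrange m
    exact ⟨l, by rw [hl]⟩
  push Not at hrange
  obtain ⟨m₀, hm₀⟩ := hrange
  obtain ⟨l, hl, hlb'⟩ := b.exists_repr_ne_zero_notMem_range b' hm₀
  obtain ⟨b'', hb''⟩ := b.exists_coe_eq_update hl
  refine (reachable_of_coe_eq_update hk h2k b b'' hb'').trans (ih _ ?_ b'' rfl)
  rw [← hN, hb'']
  exact ncard_lt_ncard (setOf_notMem_range_update_ssubset hlb' hm₀)

end Graph

theorem apartmentGraph_connected_general
    {R V : Type*} [DivisionRing R] [AddCommGroup V] [Module R V]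
    (n k : ℕ) (hV : Module.finrank R V = n)
    (hk : 1 < k) (hkn : k ≤ n - k) :
    (apartmentGraph R V n k).Connected := by
  have h2k : 2 * k ≤ n := by omega
  have : Module.Finite R V := Module.finite_of_finrank_pos (by omega)
  refine (SimpleGraph.connected_iff _).2
    ⟨?_, ⟨apartmentVertex k (Module.finBasisOfFinrankEq R V hV)⟩⟩
  rintro ⟨_, b, rfl⟩ ⟨_, b', rfl⟩
  exact reachable_apartmentVertex hk h2k b b'

/-- For `1 < k ≤ n - k`, the graph `A_k` of apartments of `G_k(V)` is
connected. -/
theorem apartmentGraph_connected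
    {R V : Type*} [DivisionRing R] [AddCommGroup V] [Module R V]
    [FiniteDimensional R V] (n k : ℕ) (hV : Module.finrank R V = n)
    (hk : 1 < k) (hkn : k ≤ n - k) :
    (apartmentGraph R V n k).Connected :=
  apartmentGraph_connected_general n k hV hk hkn
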